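/- If the group G has finite exponent e (that is, g^e = 1 for all g ∈ G, e > 0), then for every element x of the subgroup R of the weak commutativity group χ(G) one has x^e ∈ L₁₂ (i.e. the exponent of R/L₁₂ divides e). -/

import Mathlib

open Subgroup

/-- The weak commutativity relations inside the free product `G ∗ G`. -/
def chiRel (G : Type*) [Group G] : Subgroup (Monoid.Coprod G G) :=
  Subgroup.normalClosure
    {x | ∃ g : G, x = Monoid.Coprod.inl g * Monoid.Coprod.inr g *
      (Monoid.Coprod.inl g)⁻¹ * (Monoid.Coprod.inr g)⁻¹}

instance chiRel_normal (G : Type*) [Group G] : (chiRel G).Normal :=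
  Subgroup.normalClosure_normal

/-- The weak commutativity group `χ(G)`. -/
def Chi (G : Type*) [Group G] : Type _ := Monoid.Coprod G G ⧸ chiRel G

instance (G : Type*) [Group G] : Group (Chi G) :=
  inferInstanceAs (Group (Monoid.Coprod G G ⧸ chiRel G))

/-- The canonical map `G → χ(G)`, `g ↦ g`. -/
def chiIota1 (G : Type*) [Group G] : G →* Chi G :=
  (QuotientGroup.mk' (chiRel G)).comp Monoid.Coprod.inl

/-- The canonical map `G → χ(G)`, `g ↦ g^φ`. -/
def chiIota2 (G : Type*) [Group G] : G →* Chi G :=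
  (QuotientGroup.mk' (chiRel G)).comp Monoid.Coprod.inr

/-- `G₁ ≤ χ(G)`. -/
def chiG1 (G : Type*) [Group G] : Subgroup (Chi G) := (chiIota1 G).range

/-- `G₂ = G^φ ≤ χ(G)`. -/
def chiG2 (G : Type*) [Group G] : Subgroup (Chi G) := (chiIota2 G).range

/-- `L = ⟨g⁻¹ g^φ : g ∈ G⟩`. -/
def chiL (G : Type*) [Group G] : Subgroup (Chi G) :=
  Subgroup.closure {x | ∃ g : G, x = (chiIota1 G g)⁻¹ * chiIota2 G g}

/-- `D = ⁅G₁, G₂⁆`. -/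
def chiD (G : Type*) [Group G] : Subgroup (Chi G) := ⁅chiG1 G, chiG2 G⁆

/-- `L₁ = ⁅L, G₁⁆`. -/
def chiL1 (G : Type*) [Group G] : Subgroup (Chi G) := ⁅chiL G, chiG1 G⁆

/-- `L₂ = ⁅L, G₂⁆`. -/
def chiL2 (G : Type*) [Group G] : Subgroup (Chi G) := ⁅chiL G, chiG2 G⁆

/-- `R = ⁅⁅G₁, L⁆, G₂⁆`. -/
def chiR (G : Type*) [Group G] : Subgroup (Chi G) := ⁅⁅chiG1 G, chiL G⁆, chiG2 G⁆

/-- `L₁₂ = ⁅L₁, L₂⁆`. -/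
def chiL12 (G : Type*) [Group G] : Subgroup (Chi G) := ⁅chiL1 G, chiL2 G⁆

/-! Sidki's relations `[g, h^φ] = [g^φ, h]` and `[D, L] = 1`, together with `R ≤ D ∩ L`, make `R`
abelian and centralized by `L`. Hence, for `s ∈ G₁` and `t ∈ G₂`, the map `m ↦ [m, t]` is a
homomorphism on `L₁`, and modulo `L₁₂` so is `l ↦ [[l, s], t]` on `L`, the defect being a conjugate
of a commutator of an element of `L₁` with one of `L₂`. As `L` is generated by the elements
`g⁻¹ g^φ`, whose `e`-th powers `(g^e)⁻¹ (g^e)^φ` are trivial, `R L₁₂ / L₁₂` is an abelian group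
generated by elements of exponent dividing `e`. -/

open scoped commutatorElement

namespace Subgroup

variable {X : Type*} [Group X]

theorem commutator_normal_of_sup_eq_top {A B : Subgroup X} (h : A ⊔ B = ⊤) : ⁅A, B⁆.Normal := by
  rw [← normalizer_eq_top_iff, eq_top_iff, ← h]
  exact sup_le (normalizer_commutator_ge_left A B) (normalizer_commutator_ge_right A B)

theorem commutator_commutator_top_le_of_sup_eq_top {A B : Subgroup X} (h : A ⊔ B = ⊤) :
    ⁅⁅A, (⊤ : Subgroup X)⁆, B⁆ ≤ ⁅A, B⁆ := by
  have := commutator_normal_of_sup_eq_top h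
  let ψ := QuotientGroup.mk' ⁅A, B⁆
  have hcomm : ⁅B.map ψ, A.map ψ⁆ = ⊥ := by
    rw [← map_commutator, map_eq_bot_iff, QuotientGroup.ker_mk', commutator_comm]
  have hnorm : (⊤ : Subgroup X).map ψ ≤ normalizer (A.map ψ) := by
    rw [← h, map_sup]
    exact sup_le le_normalizer
      ((commutator_eq_bot_iff_le_centralizer.mp hcomm).trans (centralizer_le_normalizer _))
  rw [← QuotientGroup.ker_mk' ⁅A, B⁆, ← map_eq_bot_iff, map_commutator, map_commutator, eq_bot_iff,
    ← hcomm, commutator_comm (B.map ψ)]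
  exact commutator_mono (le_normalizer_iff_commutator_le_left.mp hnorm) le_rfl

end Subgroup

theorem MonoidHom.pow_apply_eq_one_of_closure {K Q : Type*} [Group K] [Group Q] {s : Set K}
    {n : ℕ} (f : Subgroup.closure s →* Q) (hf : ∀ x y, Commute (f x) (f y))
    (hs : ∀ x (hx : x ∈ s), f ⟨x, subset_closure hx⟩ ^ n = 1) (x : Subgroup.closure s) :
    f x ^ n = 1 := by
  obtain ⟨x, hx⟩ := x
  induction hx using closure_induction with
  | mem x hx => exact hs x hx
  | one => exact (congrArg (· ^ n) f.map_one).trans (one_pow n)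
  | mul x y hx hy ihx ihy =>
    rw [show f ⟨x * y, _⟩ = f ⟨x, hx⟩ * f ⟨y, hy⟩ from f.map_mul ⟨x, hx⟩ ⟨y, hy⟩,
      (hf _ _).mul_pow, ihx, ihy, one_mul]
  | inv x hx ih =>
    rw [show f ⟨x⁻¹, _⟩ = (f ⟨x, hx⟩)⁻¹ from f.map_inv ⟨x, hx⟩, inv_pow, ih, inv_one]

theorem commutatorElement_eq_conj_of_commute {X : Type*} [Group X] {x y z w : X}
    (hxz : Commute x z) (hyw : Commute y w) (h : Commute (x * y) (z * w)) :
    ⁅x, w⁆ = (x⁻¹ * z)⁻¹ * ⁅z, y⁆ * (x⁻¹ * z) := by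
  rw [← commutatorElement_eq_one_iff_commute] at hxz hyw h
  have hconj : x * ⁅y, z⁆ * x⁻¹ * (z * ⁅x, w⁆ * z⁻¹) = 1 := by
    calc x * ⁅y, z⁆ * x⁻¹ * (z * ⁅x, w⁆ * z⁻¹)
        = x * (⁅y, z⁆ * (z * ⁅y, w⁆ * z⁻¹)) * x⁻¹ * (⁅x, z⁆ * (z * ⁅x, w⁆ * z⁻¹)) := by
          rw [hxz, hyw]; group
      _ = ⁅x * y, z * w⁆ := by simp only [commutatorElement_def]; group
      _ = 1 := h
  calc ⁅x, w⁆ = z⁻¹ * (z * ⁅x, w⁆ * z⁻¹) * z := by group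
    _ = z⁻¹ * (x * ⁅y, z⁆ * x⁻¹)⁻¹ * z := by rw [eq_inv_of_mul_eq_one_right hconj]
    _ = (x⁻¹ * z)⁻¹ * ⁅z, y⁆ * (x⁻¹ * z) := by rw [← commutatorElement_inv]; group

section Chi

variable {G : Type*} [Group G]

local notation "ι₁" => chiIota1 _
local notation "ι₂" => chiIota2 _
local notation "π" => QuotientGroup.mk' (chiL12 _)

theorem chiIota1_commute_chiIota2 (g : G) : Commute (ι₁ g) (ι₂ g) := by
  have h : QuotientGroup.mk' (chiRel G) ⁅Monoid.Coprod.inl g, Monoid.Coprod.inr g⁆ = 1 :=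
    (QuotientGroup.eq_one_iff _).mpr (subset_normalClosure ⟨g, commutatorElement_def _ _⟩)
  rw [map_commutatorElement] at h
  exact commutatorElement_eq_one_iff_commute.mp h

def chiU (g : G) : Chi G := (ι₁ g)⁻¹ * ι₂ g

theorem chiU_mem_chiL (g : G) : chiU g ∈ chiL G := subset_closure ⟨g, rfl⟩

theorem chiIota2_eq_mul_chiU (g : G) : ι₂ g = ι₁ g * chiU g := by
  rw [chiU, mul_inv_cancel_left]

theorem chiIota1_eq_mul_chiU_inv (g : G) : ι₁ g = ι₂ g * (chiU g)⁻¹ := by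
  rw [chiU, mul_inv_rev, inv_inv, mul_inv_cancel_left]

theorem chiU_mul (a b : G) : chiU (a * b) = (ι₁ b)⁻¹ * chiU a * ι₁ b * chiU b := by
  simp only [chiU, map_mul]; group

theorem chiU_pow (g : G) (n : ℕ) : chiU (g ^ n) = chiU g ^ n := by
  rw [chiU, chiU, (chiIota1_commute_chiIota2 g).inv_left.mul_pow, map_pow, map_pow, inv_pow]

theorem chiU_one : chiU (1 : G) = 1 := by
  simpa using chiU_pow (1 : G) 0

theorem chiG1_sup_chiG2 : chiG1 G ⊔ chiG2 G = ⊤ := by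
  have h := congrArg (map (QuotientGroup.mk' (chiRel G)))
    (Monoid.Coprod.range_inl_sup_range_inr (G := G) (H := G))
  rwa [Subgroup.map_sup, MonoidHom.map_range, MonoidHom.map_range, ← MonoidHom.range_eq_map,
    QuotientGroup.range_mk'] at h

theorem chiL_sup_chiG1 : chiL G ⊔ chiG1 G = ⊤ := by
  rw [eq_top_iff, ← chiG1_sup_chiG2, sup_comm (chiL G)]
  refine sup_le le_sup_left ?_
  rintro _ ⟨g, rfl⟩
  rw [chiIota2_eq_mul_chiU]
  exact mul_mem (mem_sup_left ⟨g, rfl⟩) (mem_sup_right (chiU_mem_chiL g))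

theorem chiL_sup_chiG2 : chiL G ⊔ chiG2 G = ⊤ := by
  rw [eq_top_iff, ← chiG1_sup_chiG2, sup_comm (chiL G)]
  refine sup_le ?_ le_sup_left
  rintro _ ⟨g, rfl⟩
  rw [chiIota1_eq_mul_chiU_inv]
  exact mul_mem (mem_sup_left ⟨g, rfl⟩) (mem_sup_right (inv_mem (chiU_mem_chiL g)))

instance chiL_normal : (chiL G).Normal := by
  rw [← normalizer_eq_top_iff, eq_top_iff, ← chiL_sup_chiG1]
  refine sup_le le_normalizer (le_normalizer_closure_iff.mpr ?_)
  rintro _ ⟨b, rfl⟩ _ ⟨a, rfl⟩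
  have hconj : ι₁ b * chiU a * (ι₁ b)⁻¹ = chiU (a * b⁻¹) * (chiU b⁻¹)⁻¹ := by
    rw [chiU_mul, map_inv]; group
  exact hconj ▸ mul_mem (chiU_mem_chiL _) (inv_mem (chiU_mem_chiL _))

instance chiL1_normal : (chiL1 G).Normal := commutator_normal_of_sup_eq_top chiL_sup_chiG1

instance chiL2_normal : (chiL2 G).Normal := commutator_normal_of_sup_eq_top chiL_sup_chiG2

instance chiL12_normal : (chiL12 G).Normal := commutator_normal _ _

theorem commutatorElement_chiIota1_chiIota2_eq_conj (a b : G) :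
    ⁅ι₁ a, ι₂ b⁆ = (chiU a)⁻¹ * ⁅ι₂ a, ι₁ b⁆ * chiU a :=
  commutatorElement_eq_conj_of_commute (chiIota1_commute_chiIota2 a)
    (chiIota1_commute_chiIota2 b) (by simpa using chiIota1_commute_chiIota2 (a * b))

-- compare the two expansions of `⁅ι₁ a, ι₂ (b * c)⁆` given by the previous lemma
theorem commute_commutatorElement_chiU_mul_inv (a b c : G) :
    Commute ⁅ι₂ a, ι₁ c⁆ (chiU a * (chiU (a * b))⁻¹) := by
  have hA : ⁅ι₁ a, ι₂ (b * c)⁆ = ((chiU a)⁻¹ * ⁅ι₂ a, ι₁ b⁆ * chiU a) *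
      (ι₂ b * ((chiU a)⁻¹ * ⁅ι₂ a, ι₁ c⁆ * chiU a) * (ι₂ b)⁻¹) := by
    rw [map_mul, commutatorElement_mul_right_eq_mul_conj,
      commutatorElement_chiIota1_chiIota2_eq_conj, commutatorElement_chiIota1_chiIota2_eq_conj]
    group
  have hB : ⁅ι₁ a, ι₂ (b * c)⁆ =
      (chiU a)⁻¹ * ⁅ι₂ a, ι₁ b⁆ * (ι₁ b * ⁅ι₂ a, ι₁ c⁆ * (ι₁ b)⁻¹) * chiU a := by
    rw [commutatorElement_chiIota1_chiIota2_eq_conj, map_mul,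
      commutatorElement_mul_right_eq_mul_conj]
    group
  have hz : chiU a * (chiU (a * b))⁻¹ = chiU a * (ι₂ b)⁻¹ * (chiU a)⁻¹ * ι₁ b := by
    rw [chiU_mul, chiIota2_eq_mul_chiU b]; group
  set u := chiU a
  set y := ⁅ι₂ a, ι₁ c⁆
  set k := ⁅ι₂ a, ι₁ b⁆
  rw [hz, commute_iff_eq]
  calc y * (u * (ι₂ b)⁻¹ * u⁻¹ * ι₁ b)
      = (u * (ι₂ b)⁻¹ * u⁻¹ * k⁻¹ * u) * ((u⁻¹ * k * u) * (ι₂ b * (u⁻¹ * y * u) * (ι₂ b)⁻¹)) *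
          (u⁻¹ * ι₁ b) := by group
    _ = (u * (ι₂ b)⁻¹ * u⁻¹ * k⁻¹ * u) * (u⁻¹ * k * (ι₁ b * y * (ι₁ b)⁻¹) * u) *
          (u⁻¹ * ι₁ b) := by rw [← hA, hB]
    _ = (u * (ι₂ b)⁻¹ * u⁻¹ * ι₁ b) * y := by group

theorem commute_commutatorElement_chiU (a c x : G) : Commute ⁅ι₂ a, ι₁ c⁆ (chiU x) := by
  have ha : Commute ⁅ι₂ a, ι₁ c⁆ (chiU a) := by
    simpa [chiU_one] using commute_commutatorElement_chiU_mul_inv a a⁻¹ c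
  simpa using
    (ha.inv_right.mul_right (commute_commutatorElement_chiU_mul_inv a (a⁻¹ * x) c)).inv_right

theorem commutatorElement_chiIota1_chiIota2 (a b : G) : ⁅ι₁ a, ι₂ b⁆ = ⁅ι₂ a, ι₁ b⁆ := by
  rw [commutatorElement_chiIota1_chiIota2_eq_conj, mul_assoc,
    (commute_commutatorElement_chiU a b a).eq, inv_mul_cancel_left]

theorem chiD_le_centralizer_chiL : chiD G ≤ centralizer (chiL G) := by
  rw [chiD, commutator_le]
  rintro _ ⟨a, rfl⟩ _ ⟨b, rfl⟩
  rw [chiL, centralizer_closure, mem_centralizer_iff, commutatorElement_chiIota1_chiIota2]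
  rintro _ ⟨x, rfl⟩
  exact (commute_commutatorElement_chiU a b x).symm.eq

theorem chiR_eq_commutator : chiR G = ⁅chiL1 G, chiG2 G⁆ := by
  rw [chiR, commutator_comm (chiG1 G)]; rfl

theorem chiR_le_chiD : chiR G ≤ chiD G :=
  (commutator_mono (commutator_mono le_rfl le_top) le_rfl).trans
    (commutator_commutator_top_le_of_sup_eq_top chiG1_sup_chiG2)

theorem chiR_le_chiL : chiR G ≤ chiL G := by
  rw [chiR_eq_commutator]
  exact (commutator_le_left _ _).trans (commutator_le_left _ _)

theorem commute_of_mem_chiR_of_mem_chiL {r l : Chi G} (hr : r ∈ chiR G) (hl : l ∈ chiL G) :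
    Commute r l :=
  (mem_centralizer_iff.mp (chiD_le_centralizer_chiL (chiR_le_chiD hr)) l hl).symm

theorem commute_of_mem_chiR {r r' : Chi G} (hr : r ∈ chiR G) (hr' : r' ∈ chiR G) : Commute r r' :=
  commute_of_mem_chiR_of_mem_chiL hr (chiR_le_chiL hr')

theorem commutatorElement_mem_chiR {m t : Chi G} (hm : m ∈ chiL1 G) (ht : t ∈ chiG2 G) :
    ⁅m, t⁆ ∈ chiR G := by
  rw [chiR_eq_commutator]
  exact commutator_mem_commutator hm ht

theorem commutatorElement_commutatorElement_mem_chiR {l s t : Chi G} (hl : l ∈ chiL G)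
    (hs : s ∈ chiG1 G) (ht : t ∈ chiG2 G) : ⁅⁅l, s⁆, t⁆ ∈ chiR G :=
  commutatorElement_mem_chiR (commutator_mem_commutator hl hs) ht

theorem commutatorElement_mul_left_of_mem_chiL1 {m m' t : Chi G} (hm : m ∈ chiL1 G)
    (hm' : m' ∈ chiL1 G) (ht : t ∈ chiG2 G) : ⁅m * m', t⁆ = ⁅m, t⁆ * ⁅m', t⁆ := by
  rw [commutatorElement_mul_left_eq_conj_mul, (commute_of_mem_chiR_of_mem_chiL
      (commutatorElement_mem_chiR hm' ht) (commutator_le_left _ _ hm)).symm.mul_inv_cancel,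
    (commute_of_mem_chiR (commutatorElement_mem_chiR hm' ht)
      (commutatorElement_mem_chiR hm ht)).eq]

theorem mk_commutatorElement_commutatorElement_mul {l l' s t : Chi G} (hl : l ∈ chiL G)
    (hl' : l' ∈ chiL G) (hs : s ∈ chiG1 G) (ht : t ∈ chiG2 G) :
    π ⁅⁅l * l', s⁆, t⁆ = π ⁅⁅l, s⁆, t⁆ * π ⁅⁅l', s⁆, t⁆ := by
  set c := l * ⁅l', s⁆ * l⁻¹
  have expand : ⁅⁅l * l', s⁆, t⁆ = (c * ⁅⁅l, s⁆, t⁆ * c⁻¹) * (l * ⁅⁅l', s⁆, t⁆ * l⁻¹) *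
      ((l * t) * ⁅⁅l', s⁆, ⁅t⁻¹, l⁻¹⁆⁆ * (l * t)⁻¹) := by
    simp only [c, commutatorElement_def]; group
  have hc : c ∈ chiL G :=
    chiL_normal.conj_mem _ (commutator_le_left _ _ (commutator_mem_commutator hl' hs)) l
  have hdefect : π ((l * t) * ⁅⁅l', s⁆, ⁅t⁻¹, l⁻¹⁆⁆ * (l * t)⁻¹) = 1 := by
    rw [← MonoidHom.mem_ker, QuotientGroup.ker_mk']
    refine chiL12_normal.conj_mem _ ?_ _
    refine commutator_mem_commutator (commutator_mem_commutator hl' hs) ?_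
    rw [← commutatorElement_inv]
    exact inv_mem (commutator_mem_commutator (inv_mem hl) (inv_mem ht))
  have hρ := commutatorElement_commutatorElement_mem_chiR hl hs ht
  have hρ' := commutatorElement_commutatorElement_mem_chiR hl' hs ht
  rw [expand, (commute_of_mem_chiR_of_mem_chiL hρ hc).symm.mul_inv_cancel,
    (commute_of_mem_chiR_of_mem_chiL hρ' hl).symm.mul_inv_cancel, map_mul, map_mul, hdefect,
    mul_one]

theorem mk_commutatorElement_commutatorElement_pow_eq_one {e : ℕ} (hG : ∀ g : G, g ^ e = 1)
    {l s t : Chi G} (hl : l ∈ chiL G) (hs : s ∈ chiG1 G) (ht : t ∈ chiG2 G) :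
    π ⁅⁅l, s⁆, t⁆ ^ e = 1 := by
  let τ : chiL G →* Chi G ⧸ chiL12 G := MonoidHom.mk' (fun l => π ⁅⁅(l : Chi G), s⁆, t⁆)
    fun l l' => mk_commutatorElement_commutatorElement_mul l.2 l'.2 hs ht
  refine τ.pow_apply_eq_one_of_closure (fun x y => ?_) ?_ ⟨l, hl⟩
  · exact (commute_of_mem_chiR (commutatorElement_commutatorElement_mem_chiR x.2 hs ht)
      (commutatorElement_commutatorElement_mem_chiR y.2 hs ht)).map π
  · rintro _ ⟨g, rfl⟩
    have hpow : (⟨chiU g, chiU_mem_chiL g⟩ : chiL G) ^ e = 1 :=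
      Subtype.ext (by rw [SubgroupClass.coe_pow, ← chiU_pow, hG, chiU_one]; rfl)
    change τ ⟨chiU g, chiU_mem_chiL g⟩ ^ e = 1
    rw [← map_pow, hpow, map_one]

theorem mk_commutatorElement_pow_eq_one {e : ℕ} (hG : ∀ g : G, g ^ e = 1) {m t : Chi G}
    (hm : m ∈ chiL1 G) (ht : t ∈ chiG2 G) : π ⁅m, t⁆ ^ e = 1 := by
  let f : chiL1 G →* Chi G ⧸ chiL12 G := MonoidHom.mk' (fun m => π ⁅(m : Chi G), t⁆)
    fun m m' => by rw [coe_mul, commutatorElement_mul_left_of_mem_chiL1 m.2 m'.2 ht, map_mul]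
  refine f.pow_apply_eq_one_of_closure (fun x y => ?_) ?_ ⟨m, hm⟩
  · exact (commute_of_mem_chiR (commutatorElement_mem_chiR x.2 ht)
      (commutatorElement_mem_chiR y.2 ht)).map π
  · rintro _ ⟨l, hl, s, hs, rfl⟩
    exact mk_commutatorElement_commutatorElement_pow_eq_one hG hl hs ht

theorem mk_pow_eq_one_of_mem_chiR {e : ℕ} (hG : ∀ g : G, g ^ e = 1) {x : Chi G}
    (hx : x ∈ chiR G) : π x ^ e = 1 := by
  rw [chiR_eq_commutator] at hx
  refine ((π).comp ⁅chiL1 G, chiG2 G⁆.subtype).pow_apply_eq_one_of_closure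
    (fun y z => ?_) ?_ ⟨x, hx⟩
  · exact (commute_of_mem_chiR (chiR_eq_commutator.ge y.2) (chiR_eq_commutator.ge z.2)).map π
  · rintro _ ⟨m, hm, t, ht, rfl⟩
    exact mk_commutatorElement_pow_eq_one hG hm ht

end Chi

theorem chiR_mod_L12_exponent_general (G : Type*) [Group G] (e : ℕ)
    (hG : ∀ g : G, g ^ e = 1) :
    ∀ x ∈ chiR G, x ^ e ∈ chiL12 G := by
  intro x hx
  have hπ := mk_pow_eq_one_of_mem_chiR hG hx
  rwa [← map_pow, QuotientGroup.mk'_apply, QuotientGroup.eq_one_iff] at hπ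

theorem chiR_mod_L12_exponent (G : Type*) [Group G] (e : ℕ) (he : 0 < e)
    (hG : ∀ g : G, g ^ e = 1) :
    ∀ x ∈ chiR G, x ^ e ∈ chiL12 G :=
  chiR_mod_L12_exponent_general G e hG
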